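/- arXiv:1008.2557 — 2 statements merged into one kernel-verified Lean document; each statement's English description precedes it below -/
import Mathlib

section
/- Let G be a finite multidigraph with an edge e* = (w*, v*). If every vertex of G has in-degree at least 1 and the vertex v* has in-degree at least 2, then the map ρ : ℤE → ℤV (sending e ↦ Δ_G(w*) − v* − w* + e⁺ for e ≠ e* and e* ↦ 0) descends to a surjective group homomorphism ρ̄ from the critical group K(𝓛G, e*) of the line graph onto the critical group K(G, w*). -/
open Finsupp

/-- The Laplacian of a multidigraph with edge tail map `t` and head map `h`,
as a linear endomorphism of the free abelian group on the vertices. -/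
noncomputable def lap {V E : Type*} [Fintype E] [DecidableEq V] (t h : E → V) :
    (V →₀ ℤ) →ₗ[ℤ] (V →₀ ℤ) :=
  Finsupp.lift (V →₀ ℤ) ℤ V fun v =>
    ∑ e : E, if t e = v then Finsupp.single (h e) (1 : ℤ) - Finsupp.single v 1 else 0

/-- The modified Laplacian `φ_{G,w}` : sends `v ↦ Δ_G v` for `v ≠ w`, and `w ↦ w`. -/
noncomputable def phiMod {V E : Type*} [Fintype E] [DecidableEq V] (t h : E → V) (w : V) :
    (V →₀ ℤ) →ₗ[ℤ] (V →₀ ℤ) :=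
  Finsupp.lift (V →₀ ℤ) ℤ V fun v =>
    if v = w then Finsupp.single w 1 else lap t h (Finsupp.single v 1)

/-- Edges of the directed line graph: pairs `(e, f)` with `e⁺ = f⁻`. -/
def LineEdge {V E : Type*} (t h : E → V) : Type _ := {p : E × E // h p.1 = t p.2}

instance {V E : Type*} [Fintype E] [DecidableEq V] (t h : E → V) :
    Fintype (LineEdge t h) := by
  unfold LineEdge; infer_instance

/-- in-degree of a vertex -/
def indeg {V E : Type*} [Fintype E] [DecidableEq V] (h : E → V) (v : V) : ℕ :=
  (Finset.univ.filter fun e => h e = v).card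

/-- out-degree of a vertex -/
def outdeg {V E : Type*} [Fintype E] [DecidableEq V] (t : E → V) (v : V) : ℕ :=
  (Finset.univ.filter fun e => t e = v).card

/-- The modified target map `τ`: `e ↦ e⁺` for `e ≠ e*`, `e* ↦ 0`. -/
noncomputable def tau {V E : Type*} [DecidableEq E] (h : E → V) (estar : E) :
    (E →₀ ℤ) →ₗ[ℤ] (V →₀ ℤ) :=
  Finsupp.lift (V →₀ ℤ) ℤ E fun e =>
    if e = estar then 0 else Finsupp.single (h e) 1

/-- The map `ρ`: `e ↦ Δ_G(w*) − v* − w* + e⁺` for `e ≠ e*`, `e* ↦ 0`,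
where `w* = t e*` and `v* = h e*`. -/
noncomputable def rho {V E : Type*} [Fintype E] [DecidableEq V] [DecidableEq E]
    (t h : E → V) (estar : E) : (E →₀ ℤ) →ₗ[ℤ] (V →₀ ℤ) :=
  Finsupp.lift (V →₀ ℤ) ℤ E fun e =>
    if e = estar then 0 else
      lap t h (Finsupp.single (t estar) 1) - Finsupp.single (h estar) 1
        - Finsupp.single (t estar) 1 + Finsupp.single (h e) 1

/-- The map `ρ₀`: `v ↦ Δ_G(w*) − v* − w* + v`. -/
noncomputable def rho0 {V E : Type*} [Fintype E] [DecidableEq V] (t h : E → V) (estar : E) :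
    (V →₀ ℤ) →ₗ[ℤ] (V →₀ ℤ) :=
  Finsupp.lift (V →₀ ℤ) ℤ V fun v =>
    lap t h (Finsupp.single (t estar) 1) - Finsupp.single (h estar) 1
      - Finsupp.single (t estar) 1 + Finsupp.single v 1

/-- The map `ψ`: `v ↦ Δ_G v` for `v ≠ w*`, and `w* ↦ Δ_G(w*) − v*`. -/
noncomputable def psi {V E : Type*} [Fintype E] [DecidableEq V] (t h : E → V) (estar : E) :
    (V →₀ ℤ) →ₗ[ℤ] (V →₀ ℤ) :=
  Finsupp.lift (V →₀ ℤ) ℤ V fun v =>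
    if v = t estar then
      lap t h (Finsupp.single (t estar) 1) - Finsupp.single (h estar) 1
    else lap t h (Finsupp.single v 1)

/-- The map `σ`: `v ↦ Σ_{e⁻ = v} e`. -/
noncomputable def sigmaMap {V E : Type*} [Fintype E] [DecidableEq V] (t : E → V) :
    (V →₀ ℤ) →ₗ[ℤ] (E →₀ ℤ) :=
  Finsupp.lift (E →₀ ℤ) ℤ V fun v =>
    ∑ e : E, if t e = v then Finsupp.single e (1 : ℤ) else 0


/-
`ρ` intertwines the reduced Laplacians: `ρ ∘ φ_{𝓛G,e*} = φ_{G,w*} ∘ τ`, where `τ` sends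
`e ↦ e⁺` and `e* ↦ 0`. Hence `ρ` maps the relations of `K(𝓛G, e*)` into those of `K(G, w*)`
and descends to the critical groups. For surjectivity, the in-degree hypotheses say that every
vertex `v` is the head of an edge `e ≠ e*`, so `ρ(e) = c + v` with `c = Δ_G(w*) − v* − w*` is in
the image; since `w* = φ_{G,w*}(w*)` is zero in `K(G, w*)`, so is `c`, and therefore every `v`
lies in the image of `ρ` modulo the relations.
-/

namespace Submodule

variable {R M N : Type*} [Ring R] [AddCommGroup M] [Module R M] [AddCommGroup N] [Module R N]

theorem mapQ_surjective_iff_sup_range_eq_top (p : Submodule R M) (q : Submodule R N)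
    (f : M →ₗ[R] N) (hf : p ≤ q.comap f) :
    Function.Surjective (p.mapQ q f hf) ↔ q ⊔ LinearMap.range f = ⊤ := by
  rw [← LinearMap.range_eq_top, range_mapQ, map_mkQ_eq_top]

end Submodule

theorem tau_single {V E : Type*} [DecidableEq E] (h : E → V) (estar : E) (e : E) :
    tau h estar (single e 1) = if e = estar then 0 else single (h e) 1 := by
  simp [tau]

section CriticalGroup

variable {V E : Type*} [Fintype E] [DecidableEq V] [DecidableEq E] (t h : E → V) (estar : E)

omit [DecidableEq E] in
theorem lap_single (v : V) :
    lap t h (single v 1) = ∑ e ∈ Finset.univ.filter (t · = v), (single (h e) 1 - single v 1) := by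
  rw [lap, lift_apply, sum_single_index (by rw [zero_smul]), one_smul, Finset.sum_filter]

omit [DecidableEq E] in
theorem phiMod_single (w v : V) :
    phiMod t h w (single v 1) = if v = w then single w 1 else lap t h (single v 1) := by
  simp [phiMod]

omit [DecidableEq E] in
theorem rho0_single (v : V) :
    rho0 t h estar (single v 1) =
      lap t h (single (t estar) 1) - single (h estar) 1 - single (t estar) 1 + single v 1 := by
  simp [rho0]

omit [DecidableEq E] in
theorem rho0_single_sub_rho0_single (u v : V) :
    rho0 t h estar (single v 1) - rho0 t h estar (single u 1) = single v 1 - single u 1 := by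
  rw [rho0_single, rho0_single]
  abel

theorem rho_single (e : E) :
    rho t h estar (single e 1) = if e = estar then 0 else rho0 t h estar (single (h e) 1) := by
  simp [rho, rho0_single]

theorem lap_lineGraph_single (e : E) :
    lap (fun p : LineEdge t h => p.1.1) (fun p : LineEdge t h => p.1.2) (single e 1) =
      ∑ f ∈ Finset.univ.filter (t · = h e), (single f 1 - single e 1) := by
  rw [lap_single]
  refine Finset.sum_bij' (fun p _ => p.1.2)
    (fun f hf => (⟨(e, f), (Finset.mem_filter.mp hf).2.symm⟩ : LineEdge t h)) ?_ ?_ ?_ ?_ ?_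
  · rintro ⟨⟨e', f⟩, hef⟩ hp
    obtain rfl : e' = e := (Finset.mem_filter.mp hp).2
    simpa using hef.symm
  · intro f _
    exact Finset.mem_filter.mpr ⟨Finset.mem_univ _, rfl⟩
  · rintro ⟨⟨e', f⟩, hef⟩ hp
    obtain rfl : e' = e := (Finset.mem_filter.mp hp).2
    rfl
  · intro f _
    rfl
  · rintro ⟨⟨e', f⟩, hef⟩ hp
    obtain rfl : e' = e := (Finset.mem_filter.mp hp).2
    rfl

theorem rho_single_sub_rho_single {e : E} (he : e ≠ estar) (f : E) :
    rho t h estar (single f 1) - rho t h estar (single e 1) =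
      (single (h f) 1 - single (h e) 1) -
        if f = estar then rho0 t h estar (single (h estar) 1) else 0 := by
  rw [rho_single, rho_single, if_neg he]
  split_ifs with hf
  · rw [← rho0_single_sub_rho0_single t h estar (h e) (h f), hf]
    abel
  · rw [rho0_single_sub_rho0_single, sub_zero]

theorem rho_comp_phiMod_lineGraph :
    rho t h estar ∘ₗ
        phiMod (fun p : LineEdge t h => p.1.1) (fun p : LineEdge t h => p.1.2) estar =
      phiMod t h (t estar) ∘ₗ tau h estar := by
  ext e : 2
  simp only [LinearMap.comp_apply, lsingle_apply]
  rw [phiMod_single, tau_single]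
  by_cases he : e = estar
  · simp [he, rho_single]
  rw [if_neg he, if_neg he, lap_lineGraph_single, map_sum, phiMod_single, lap_single]
  simp_rw [map_sub, rho_single_sub_rho_single t h estar he]
  rw [Finset.sum_sub_distrib, Finset.sum_ite_eq']
  by_cases hw : h e = t estar
  · rw [if_pos (by simp [hw]), if_pos hw, rho0_single, ← hw, lap_single]
    abel
  · rw [if_neg (by simp [Ne.symm hw]), if_neg hw, sub_zero]

theorem range_phiMod_lineGraph_le_comap_rho :
    LinearMap.range
        (phiMod (fun p : LineEdge t h => p.1.1) (fun p : LineEdge t h => p.1.2) estar) ≤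
      (LinearMap.range (phiMod t h (t estar))).comap (rho t h estar) := by
  rw [← Submodule.map_le_iff_le_comap, ← LinearMap.range_comp, rho_comp_phiMod_lineGraph]
  exact LinearMap.range_comp_le_range _ _

theorem range_phiMod_sup_range_rho_eq_top (hhead : ∀ v : V, ∃ e ≠ estar, h e = v) :
    LinearMap.range (phiMod t h (t estar)) ⊔ LinearMap.range (rho t h estar) = ⊤ := by
  set M := LinearMap.range (phiMod t h (t estar)) ⊔ LinearMap.range (rho t h estar)
  have hw : single (t estar) 1 ∈ M :=
    Submodule.mem_sup_left ⟨single (t estar) 1, by rw [phiMod_single, if_pos rfl]⟩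
  have hrho0 (v : V) : rho0 t h estar (single v 1) ∈ M := by
    obtain ⟨e, hne, rfl⟩ := hhead v
    exact Submodule.mem_sup_right ⟨single e 1, by rw [rho_single, if_neg hne]⟩
  have hsingle (v : V) : single v 1 ∈ M := by
    have hv := M.add_mem (M.sub_mem (hrho0 v) (hrho0 (t estar))) hw
    rwa [rho0_single_sub_rho0_single, sub_add_cancel] at hv
  rw [eq_top_iff, ← Finsupp.basisSingleOne.span_eq, Submodule.span_le]
  rintro _ ⟨v, rfl⟩
  simpa using hsingle v

omit [DecidableEq E] in
theorem exists_ne_head_eq_of_indeg (hin : ∀ v : V, 1 ≤ indeg h v)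
    (hv : 2 ≤ indeg h (h estar)) (v : V) : ∃ e ≠ estar, h e = v := by
  by_cases hve : v = h estar
  · obtain ⟨e, he, hne⟩ := Finset.exists_mem_ne hv estar
    exact ⟨e, hne, hve ▸ (Finset.mem_filter.mp he).2⟩
  · obtain ⟨e, he⟩ := Finset.card_pos.mp (hin v)
    have hev : h e = v := (Finset.mem_filter.mp he).2
    exact ⟨e, fun hee => hve (hee ▸ hev.symm), hev⟩

end CriticalGroup

theorem rho_descends_to_surjection_of_critical_groups_general
    {V E : Type*} [Fintype E] [DecidableEq V] [DecidableEq E]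
    (t h : E → V) (estar : E)
    (hin : ∀ v : V, 1 ≤ indeg h v) (hv : 2 ≤ indeg h (h estar)) :
    ∃ ρbar : ((E →₀ ℤ) ⧸ LinearMap.range
          (phiMod (fun p : LineEdge t h => p.1.1) (fun p : LineEdge t h => p.1.2) estar)) →ₗ[ℤ]
        ((V →₀ ℤ) ⧸ LinearMap.range (phiMod t h (t estar))),
      Function.Surjective ρbar ∧
        ∀ x : E →₀ ℤ,
          ρbar (Submodule.Quotient.mk x) = Submodule.Quotient.mk (rho t h estar x) :=
  ⟨Submodule.mapQ _ _ _ (range_phiMod_lineGraph_le_comap_rho t h estar),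
    (Submodule.mapQ_surjective_iff_sup_range_eq_top _ _ _ _).mpr
      (range_phiMod_sup_range_rho_eq_top t h estar (exists_ne_head_eq_of_indeg h estar hin hv)),
    fun _ => rfl⟩

/-- under the in-degree hypotheses, `ρ` descends to a surjective
homomorphism from the critical group of the line graph `K(𝓛G, e*)` onto `K(G, w*)`. -/
theorem rho_descends_to_surjection_of_critical_groups
    {V E : Type*} [Fintype V] [Fintype E] [DecidableEq V] [DecidableEq E]
    (t h : E → V) (estar : E)
    (hin : ∀ v : V, 1 ≤ indeg h v) (hv : 2 ≤ indeg h (h estar)) :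
    ∃ ρbar : ((E →₀ ℤ) ⧸ LinearMap.range
          (phiMod (fun p : LineEdge t h => p.1.1) (fun p : LineEdge t h => p.1.2) estar)) →ₗ[ℤ]
        ((V →₀ ℤ) ⧸ LinearMap.range (phiMod t h (t estar))),
      Function.Surjective ρbar ∧
        ∀ x : E →₀ ℤ,
          ρbar (Submodule.Quotient.mk x) = Submodule.Quotient.mk (rho t h estar x) :=
  rho_descends_to_surjection_of_critical_groups_general t h estar hin hv
end

section
/- Let G be a finite multidigraph that is k-out-regular for a positive integer k, and let σ : ℤV → ℤE be determined on vertices by σ(v) = Σ_{e ∈ E, e⁻ = v} e. Then for every vertex v of G, σ(Δ_G(v)) = Σ_{e ∈ E, e⁻ = v} Δ_{𝓛G}(e), where Δ_{𝓛G} is the Laplacian of the line graph 𝓛G. -/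
open Finsupp

lemma lift_single' {X M : Type*} [AddCommGroup M] [Module ℤ M] (f : X → M) (x : X) :
    (Finsupp.lift M ℤ X f) (Finsupp.single x 1) = f x := by
  conv_rhs => rw [← (Finsupp.lift M ℤ X).symm_apply_apply f]
  rw [Finsupp.lift_symm_apply]

lemma line_sum {V E : Type*} [Fintype E] [DecidableEq V] [DecidableEq E]
    (t h : E → V) (k : ℕ) (hreg : ∀ v : V, outdeg t v = k) (e : E) :
    (∑ p : LineEdge t h,
        if p.1.1 = e then Finsupp.single p.1.2 (1 : ℤ) - Finsupp.single e 1 else 0) =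
      (∑ f : E, if t f = h e then Finsupp.single f (1 : ℤ) else 0)
        - k • Finsupp.single e 1 := by
  have hsub := Finset.sum_subtype (p := fun p : E × E => h p.1 = t p.2)
    (F := instFintypeLineEdgeOfDecidableEq t h)
    (Finset.univ.filter fun p : E × E => h p.1 = t p.2) (by simp)
    (fun p : E × E => if p.1 = e then Finsupp.single p.2 (1 : ℤ) - Finsupp.single e 1 else 0)
  rw [show (∑ p : LineEdge t h,
      if p.1.1 = e then Finsupp.single p.1.2 (1 : ℤ) - Finsupp.single e 1 else 0) =
      ∑ p : {p : E × E // h p.1 = t p.2},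
      if p.1.1 = e then Finsupp.single p.1.2 (1 : ℤ) - Finsupp.single e 1 else 0 from rfl,
    ← hsub, Finset.sum_filter, Fintype.sum_prod_type]
  have step : ∀ a : E, (∑ b : E, if h a = t b then
      (if a = e then Finsupp.single b (1 : ℤ) - Finsupp.single e 1 else 0) else 0) =
      if a = e then (∑ b : E, if t b = h e then
        Finsupp.single b (1 : ℤ) - Finsupp.single e 1 else 0) else 0 := by
    intro a
    by_cases ha : a = e
    · subst ha
      simp only [if_pos rfl]
      refine Finset.sum_congr rfl fun b _ => ?_
      by_cases hb : t b = h a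
      · simp [hb]
      · rw [if_neg fun hh => hb hh.symm, if_neg hb]
    · simp [ha]
  rw [Finset.sum_congr rfl fun a _ => step a, Finset.sum_ite_eq' Finset.univ e,
    if_pos (Finset.mem_univ e)]
  rw [Finset.sum_ite (f := fun b => Finsupp.single b (1:ℤ) - Finsupp.single e 1) (g := fun _ => 0)]
  simp only [Finset.sum_const_zero, add_zero, Finset.sum_sub_distrib, Finset.sum_const]
  have hcard : (Finset.univ.filter fun b => t b = h e).card = k := hreg (h e)
  rw [hcard, Finset.sum_filter]

/-- for a `k`-out-regular graph,
`σ(Δ_G v) = Σ_{e⁻ = v} Δ_{𝓛G}(e)` for every vertex `v`. -/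
theorem sigma_lap_eq_sum_line_lap
    {V E : Type*} [Fintype E] [DecidableEq V] [DecidableEq E]
    (t h : E → V) (k : ℕ) (hk : 0 < k)
    (hreg : ∀ v : V, outdeg t v = k) :
    ∀ v : V,
      sigmaMap t (lap t h (Finsupp.single v 1)) =
        ∑ e : E, if t e = v then
          lap (fun p : LineEdge t h => p.1.1) (fun p : LineEdge t h => p.1.2)
            (Finsupp.single e 1)
        else 0 := by
  intro v
  have hσ : ∀ w : V, sigmaMap t (Finsupp.single w 1) =
      ∑ f : E, if t f = w then Finsupp.single f (1 : ℤ) else 0 := fun w => lift_single' _ _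
  have hlap : lap t h (Finsupp.single v 1) =
      ∑ e : E, if t e = v then Finsupp.single (h e) (1 : ℤ) - Finsupp.single v 1 else 0 :=
    lift_single' _ _
  have hline : ∀ e : E,
      lap (fun p : LineEdge t h => p.1.1) (fun p : LineEdge t h => p.1.2)
        (Finsupp.single e 1) =
      ∑ p : LineEdge t h,
        if p.1.1 = e then Finsupp.single p.1.2 (1 : ℤ) - Finsupp.single e 1 else 0 :=
    fun e => lift_single' _ _
  rw [hlap, map_sum]
  calc (∑ e : E, sigmaMap t
        (if t e = v then Finsupp.single (h e) (1 : ℤ) - Finsupp.single v 1 else 0))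
      = ∑ e : E, if t e = v then
          (∑ f : E, if t f = h e then Finsupp.single f (1 : ℤ) else 0)
            - (∑ f : E, if t f = v then Finsupp.single f (1 : ℤ) else 0) else 0 := by
        refine Finset.sum_congr rfl fun e _ => ?_
        rw [apply_ite (sigmaMap t), map_sub, map_zero, hσ, hσ]
    _ = ∑ e : E, if t e = v then
          (∑ f : E, if t f = h e then Finsupp.single f (1 : ℤ) else 0)
            - k • Finsupp.single e 1 else 0 := by
        simp only [Finset.sum_ite (g := fun _ => (0 : E →₀ ℤ)), Finset.sum_const_zero,
          add_zero, Finset.sum_sub_distrib, Finset.sum_const]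
        congr 1
        have hcard : (Finset.univ.filter fun e => t e = v).card = k := hreg v
        rw [hcard, ← Finset.smul_sum, Finset.smul_sum]
    _ = ∑ e : E, if t e = v then
          lap (fun p : LineEdge t h => p.1.1) (fun p : LineEdge t h => p.1.2)
            (Finsupp.single e 1) else 0 := by
        refine Finset.sum_congr rfl fun e _ => ?_
        rw [hline, line_sum t h k hreg e]
end
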